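/- arXiv:1011.5631 — 5 statements merged into one kernel-verified Lean document; each statement's English description precedes it below -/
import Mathlib

section
/- Let s be an even positive integer, d a real number, and λ a real number with λ ∈ (0, π) such that sλ/2 is not an integer multiple of π (equivalently, λ is not of the form 2πj/s for an integer j). Set λ_j = 2πj/s for j = 0, 1, …, s/2, and set d_j = d/2 for j = 0 and j = s/2, and d_j = d for 0 < j < s/2. Then ∏_{j=0}^{s/2} |2 sin((λ − λ_j)/2) · 2 sin((λ + λ_j)/2)|^{−2 d_j} = (2|sin(sλ/2)|)^{−2d}. -/
/-!
Evaluating `z ^ s - 1 = ∏_{j < s} (z - e^{2πij/s})` in absolute value at `z = e^{iλ}` gives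
`∏_{j < s} 2|sin((λ - λ_j)/2)| = 2|sin(sλ/2)|`. Since `λ + λ_j = (λ - λ_{s-j}) + 2π`, the
factor `|2 sin((λ + λ_j)/2)|` of the seasonal product is the chord to the root `λ_{s-j}`, so
the product over `0 ≤ j ≤ s/2` runs through every root of unity once, the self-paired
`j = 0` and `j = s/2` appearing squared with half the exponent.
-/

open Real Finset

lemma Complex.norm_exp_ofReal_mul_I_sub_exp_ofReal_mul_I (a b : ℝ) :
    ‖Complex.exp (a * Complex.I) - Complex.exp (b * Complex.I)‖
      = 2 * |Real.sin ((a - b) / 2)| := by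
  have hfactor : Complex.exp (a * Complex.I) - Complex.exp (b * Complex.I)
      = Complex.exp (b * Complex.I) * (Complex.exp (Complex.I * (a - b : ℝ)) - 1) := by
    rw [mul_sub, ← Complex.exp_add]; push_cast; ring_nf
  rw [hfactor, norm_mul, Complex.norm_exp_ofReal_mul_I, one_mul,
    Complex.norm_exp_I_mul_ofReal_sub_one, norm_mul, Real.norm_two, Real.norm_eq_abs]

lemma Complex.pow_sub_one_eq_prod_sub_exp {n : ℕ} (hn : 0 < n) (z : ℂ) :
    z ^ n - 1 = ∏ j ∈ range n, (z - Complex.exp ((2 * π * j / n : ℝ) * Complex.I)) := by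
  have hprod := congrArg (Polynomial.eval z) <|
    X_pow_sub_C_eq_prod (Complex.isPrimitiveRoot_exp n hn.ne') hn (one_pow n)
  simp only [Polynomial.eval_sub, Polynomial.eval_pow, Polynomial.eval_X, Polynomial.eval_C,
    Polynomial.eval_prod, mul_one] at hprod
  rw [hprod]
  refine prod_congr rfl fun j _ => ?_
  rw [← Complex.exp_nat_mul]
  push_cast
  ring_nf

theorem Finset.prod_range_half_succ_pairs_eq_prod_range {M : Type*} [CommMonoid M] (g : ℕ → M)
    {n : ℕ} (hn : Even n) (hn0 : 0 < n) :
    ∏ j ∈ range (n / 2 + 1), (if j = 0 ∨ j = n / 2 then g j else g j * g (n - j))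
      = ∏ j ∈ range n, g j := by
  obtain ⟨m, rfl⟩ := hn
  have hsplit (j : ℕ) : (if j = 0 ∨ j = m then g j else g j * g (m + m - j))
      = g j * if ¬(j = 0 ∨ j = m) then g (m + m - j) else 1 := by
    split_ifs <;> simp_all
  have hinner : (range (m + 1)).filter (fun j => ¬(j = 0 ∨ j = m)) = Ico 1 m := by
    ext j; simp only [mem_filter, mem_range, mem_Ico]; omega
  have hreflect : ∏ j ∈ Ico 1 m, g (m + m - j) = ∏ j ∈ Ico (m + 1) (m + m), g j := by
    rw [prod_Ico_reflect g 1 (by omega : m ≤ m + m + 1), show m + m + 1 - m = m + 1 by omega,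
      show m + m + 1 - 1 = m + m by omega]
  rw [show (m + m) / 2 = m by omega]
  simp_rw [hsplit]
  rw [prod_mul_distrib, ← prod_filter, hinner, hreflect, prod_range_mul_prod_Ico g (by omega)]

/-- `‖e^{iθ} - e^{2πij/n}‖`, the length of the chord from `e^{iθ}` to the `j`-th `n`-th root
of unity. -/
noncomputable def rootOfUnityChord (n : ℕ) (θ : ℝ) (j : ℕ) : ℝ :=
  2 * |sin ((θ - 2 * π * j / n) / 2)|

lemma rootOfUnityChord_nonneg (n : ℕ) (θ : ℝ) (j : ℕ) : 0 ≤ rootOfUnityChord n θ j := by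
  unfold rootOfUnityChord; positivity

theorem prod_rootOfUnityChord {n : ℕ} (hn : 0 < n) (θ : ℝ) :
    ∏ j ∈ range n, rootOfUnityChord n θ j = 2 * |sin (n * θ / 2)| := by
  have hchord (ψ : ℝ) : 2 * |sin ((θ - ψ) / 2)|
      = ‖Complex.exp (θ * Complex.I) - Complex.exp (ψ * Complex.I)‖ :=
    (Complex.norm_exp_ofReal_mul_I_sub_exp_ofReal_mul_I θ ψ).symm
  have hpow : Complex.exp (θ * Complex.I) ^ n = Complex.exp ((n * θ : ℝ) * Complex.I) := by
    rw [← Complex.exp_nat_mul]; push_cast; ring_nf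
  have hone : (1 : ℂ) = Complex.exp ((0 : ℝ) * Complex.I) := by simp
  simp_rw [rootOfUnityChord, hchord, ← norm_prod, ← Complex.pow_sub_one_eq_prod_sub_exp hn,
    hpow]
  rw [hone, Complex.norm_exp_ofReal_mul_I_sub_exp_ofReal_mul_I, sub_zero]

theorem two_mul_abs_sin_half_add_eq_rootOfUnityChord (θ : ℝ) {n j : ℕ} (hn : n ≠ 0)
    (hj : j ≤ n) : 2 * |sin ((θ + 2 * π * j / n) / 2)| = rootOfUnityChord n θ (n - j) := by
  have harg : (θ - 2 * π * ↑(n - j) / n) / 2 = (θ + 2 * π * j / n) / 2 - π := by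
    push_cast [hj]; field_simp; ring
  rw [rootOfUnityChord, harg, sin_sub_pi, abs_neg]

theorem rootOfUnityChord_self (θ : ℝ) {n : ℕ} (hn : n ≠ 0) :
    rootOfUnityChord n θ n = rootOfUnityChord n θ 0 := by
  simpa [rootOfUnityChord] using
    (two_mul_abs_sin_half_add_eq_rootOfUnityChord θ hn (Nat.zero_le n)).symm

theorem abs_two_mul_sin_mul_two_mul_sin (θ : ℝ) {n j : ℕ} (hn : n ≠ 0) (hj : j ≤ n) :
    |2 * sin ((θ - 2 * π * j / n) / 2) * (2 * sin ((θ + 2 * π * j / n) / 2))|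
      = rootOfUnityChord n θ j * rootOfUnityChord n θ (n - j) := by
  rw [← two_mul_abs_sin_half_add_eq_rootOfUnityChord θ hn hj, rootOfUnityChord,
    abs_mul, abs_mul, abs_mul, abs_two]

theorem seasonal_spectral_density_product_form_general (s : ℕ) (hs : 0 < s) (hse : Even s)
    (d lam : ℝ) :
    ∏ j ∈ Finset.range (s / 2 + 1),
        |2 * Real.sin ((lam - 2 * Real.pi * j / s) / 2) *
            (2 * Real.sin ((lam + 2 * Real.pi * j / s) / 2))| ^
          (-(2 * (if j = 0 ∨ j = s / 2 then d / 2 else d))) =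
      (2 * |Real.sin (s * lam / 2)|) ^ (-(2 * d)) := by
  have hends {j : ℕ} (hj : j = 0 ∨ j = s / 2) :
      rootOfUnityChord s lam (s - j) = rootOfUnityChord s lam j := by
    rcases hj with rfl | rfl
    · exact rootOfUnityChord_self lam hs.ne'
    · rw [show s - s / 2 = s / 2 by rcases hse with ⟨m, rfl⟩; omega]
  have hterm : ∀ j ∈ range (s / 2 + 1),
      |2 * sin ((lam - 2 * π * j / s) / 2) * (2 * sin ((lam + 2 * π * j / s) / 2))| ^
          (-(2 * (if j = 0 ∨ j = s / 2 then d / 2 else d)))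
        = if j = 0 ∨ j = s / 2 then rootOfUnityChord s lam j ^ (-(2 * d))
          else rootOfUnityChord s lam j ^ (-(2 * d)) *
            rootOfUnityChord s lam (s - j) ^ (-(2 * d)) := by
    intro j hj
    rw [abs_two_mul_sin_mul_two_mul_sin lam hs.ne' (by simp at hj; omega)]
    split_ifs with hend
    · rw [hends hend, ← pow_two, ← rpow_natCast_mul (rootOfUnityChord_nonneg _ _ _)]
      push_cast; ring_nf
    · exact mul_rpow (rootOfUnityChord_nonneg _ _ _) (rootOfUnityChord_nonneg _ _ _)
  rw [prod_congr rfl hterm,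
    prod_range_half_succ_pairs_eq_prod_range (rootOfUnityChord s lam · ^ (-(2 * d))) hse hs,
    finsetProd_rpow _ _ fun j _ => rootOfUnityChord_nonneg _ _ _, prod_rootOfUnityChord hs]

/-- Product form versus closed form of the single-period seasonal spectral density
factor (Proposition 1(b) of the paper, one seasonal period): for even positive `s`,
`λ ∈ (0, π)` with `sλ/2` not an integer multiple of `π`, and `d_j = d/2` at `j = 0, s/2`,
`d_j = d` otherwise,
`∏_{j=0}^{s/2} |2 sin((λ-λ_j)/2) · 2 sin((λ+λ_j)/2)|^{-2 d_j} = (2|sin(sλ/2)|)^{-2d}`. -/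
theorem seasonal_spectral_density_product_form (s : ℕ) (hs : 0 < s) (hse : Even s)
    (d lam : ℝ) (hlam : lam ∈ Set.Ioo 0 Real.pi)
    (hpole : ∀ k : ℤ, (s : ℝ) * lam / 2 ≠ k * Real.pi) :
    ∏ j ∈ Finset.range (s / 2 + 1),
        |2 * Real.sin ((lam - 2 * Real.pi * j / s) / 2) *
            (2 * Real.sin ((lam + 2 * Real.pi * j / s) / 2))| ^
          (-(2 * (if j = 0 ∨ j = s / 2 then d / 2 else d))) =
      (2 * |Real.sin (s * lam / 2)|) ^ (-(2 * d)) :=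
  seasonal_spectral_density_product_form_general s hs hse d lam
end

section
/- Let s₁ and s₂ be positive integers and let d₁, d₂ be real numbers satisfying |d₁| < 1/2, |d₂| < 1/2, and |d₁ + d₂| < 1/2. Then the function λ ↦ |2 sin(s₁λ/2)|^{−2d₁} · |2 sin(s₂λ/2)|^{−2d₂} is Lebesgue integrable on the interval [−π, π]. -/
open Real MeasureTheory Set

/-!
By Young's inequality `uv ≤ u^p/p + v^q/q`, the density is dominated by a combination
of `|sin(s₁λ/2)|^(-2d₁p)` and `|sin(s₂λ/2)|^(-2d₂q)`, and since `2d₁ + 2d₂ < 1` the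
conjugate exponents can be chosen with `2d₁p < 1` and `2d₂q < 1`. For `a < 1`,
`|sin x|^(-a)` is integrable over a period: Jordan's inequality `|sin x| ≥ 2|x|/π` on
`[-π/2, π/2]` bounds it by a multiple of `|x|^(-a)`.
-/

theorem abs_sin_rpow_neg_le {a x : ℝ} (ha : 0 ≤ a) (hx : |x| ≤ π / 2) :
    |sin x| ^ (-a) ≤ (π / 2) ^ a * |x| ^ (-a) := by
  rcases eq_or_ne x 0 with rfl | hx₀
  · rcases ha.eq_or_lt with rfl | ha
    · simp
    · simp [zero_rpow (neg_ne_zero.2 ha.ne')]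
  calc |sin x| ^ (-a) ≤ (2 / π * |x|) ^ (-a) :=
        rpow_le_rpow_of_nonpos (by positivity) (mul_abs_le_abs_sin hx) (neg_nonpos.2 ha)
    _ = (π / 2) ^ a * |x| ^ (-a) := by
        rw [mul_rpow (by positivity) (abs_nonneg x), rpow_neg (by positivity),
          ← inv_rpow (by positivity), inv_div]

theorem intervalIntegrable_abs_sin_rpow_neg {a : ℝ} (ha : a < 1) (b c : ℝ) :
    IntervalIntegrable (fun x => |sin x| ^ (-a)) volume b c := by
  rcases le_or_gt a 0 with ha₀ | ha₀
  · exact (continuous_sin.abs.rpow_const fun _ => Or.inr (by linarith)).intervalIntegrable b c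
  have hper : Function.Periodic (fun x => |sin x| ^ (-a)) π := fun x => by simp [sin_add_pi]
  refine hper.intervalIntegrable pi_ne_zero (t := -(π / 2)) ?_ b c
  have hball : IntegrableOn (fun x => |sin x| ^ (-a)) (Metric.ball 0 (π / 2)) := by
    refine integrableOn_ball_of_norm_le_rpow (μ := volume) (C := (π / 2) ^ a) (by simp)
      (by simpa using ha) ?_ (by fun_prop : Measurable _).aestronglyMeasurable
    refine ae_restrict_of_forall_mem measurableSet_ball fun x hx => ?_
    rw [mem_ball_zero_iff, Real.norm_eq_abs] at hx
    rw [Real.norm_eq_abs, abs_of_nonneg (by positivity), Real.norm_eq_abs]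
    exact abs_sin_rpow_neg_le ha₀.le hx.le
  rw [Real.ball_eq_Ioo, zero_sub, zero_add] at hball
  rwa [intervalIntegrable_iff_integrableOn_Ioo_of_le (by linarith [pi_pos]),
    show -(π / 2) + π = π / 2 by ring]

theorem intervalIntegrable_abs_two_mul_sin_rpow_neg (c : ℝ) {a : ℝ} (ha : a < 1) (b b' : ℝ) :
    IntervalIntegrable (fun x => |2 * sin (c * x / 2)| ^ (-a)) volume b b' := by
  have hsplit : (fun x => |2 * sin (c * x / 2)| ^ (-a)) =
      fun x => (2 : ℝ) ^ (-a) * (fun y => |sin y| ^ (-a)) (c / 2 * x) := by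
    ext x
    rw [abs_mul, abs_two, mul_rpow zero_le_two (abs_nonneg _), mul_div_right_comm]
  rw [hsplit]
  refine IntervalIntegrable.const_mul ?_ _
  rcases eq_or_ne c 0 with rfl | hc
  · simp
  · simpa [hc] using
      (intervalIntegrable_abs_sin_rpow_neg ha (c / 2 * b) (c / 2 * b')).comp_mul_left (c := c / 2)

theorem integrable_mul_of_integrable_rpow {α : Type*} [MeasurableSpace α] {μ : Measure α}
    {f g : α → ℝ} {p q : ℝ} (hpq : p.HolderConjugate q) (hf₀ : 0 ≤ f) (hg₀ : 0 ≤ g)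
    (hf : AEStronglyMeasurable f μ) (hg : AEStronglyMeasurable g μ)
    (hfp : Integrable (fun x => f x ^ p) μ) (hgq : Integrable (fun x => g x ^ q) μ) :
    Integrable (f * g) μ := by
  refine ((hfp.div_const p).add (hgq.div_const q)).mono' (hf.mul hg) (ae_of_all _ fun x => ?_)
  rw [Pi.mul_apply, Real.norm_of_nonneg (mul_nonneg (hf₀ x) (hg₀ x))]
  exact young_inequality_of_nonneg (hf₀ x) (hg₀ x) hpq

theorem exists_holderConjugate_mul_lt_one {x y : ℝ} (hx : x < 1) (hy : y < 1)
    (hxy : x + y < 1) : ∃ p q : ℝ, p.HolderConjugate q ∧ x * p < 1 ∧ y * q < 1 := by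
  have hgap : max 0 x < min 1 (1 - y) :=
    max_lt (lt_min one_pos (by linarith)) (lt_min hx (by linarith))
  obtain ⟨t, hxt, hty⟩ := exists_between hgap
  obtain ⟨ht₀, hxt⟩ := max_lt_iff.1 hxt
  obtain ⟨ht₁, hty⟩ := lt_min_iff.1 hty
  refine ⟨t⁻¹, (1 - t)⁻¹, .inv_one_sub_inv ht₀ ht₁, ?_, ?_⟩
  · rwa [← div_eq_mul_inv, div_lt_one ht₀]
  · rw [← div_eq_mul_inv, div_lt_one (by linarith)]
    linarith

theorem seasonal_spectral_density_integrable_general (s₁ s₂ : ℕ)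
    (d₁ d₂ : ℝ) (hd₁ : |d₁| < 1 / 2) (hd₂ : |d₂| < 1 / 2) (hsum : |d₁ + d₂| < 1 / 2) :
    IntegrableOn
      (fun lam : ℝ =>
        |2 * Real.sin (s₁ * lam / 2)| ^ (-(2 * d₁)) *
          |2 * Real.sin (s₂ * lam / 2)| ^ (-(2 * d₂)))
      (Set.Icc (-Real.pi) Real.pi) := by
  obtain ⟨p, q, hpq, hp, hq⟩ := exists_holderConjugate_mul_lt_one (x := 2 * d₁) (y := 2 * d₂)
    (by linarith [(abs_lt.1 hd₁).2]) (by linarith [(abs_lt.1 hd₂).2])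
    (by linarith [(abs_lt.1 hsum).2])
  have hfactor : ∀ (s : ℕ) (d r : ℝ), 2 * d * r < 1 →
      IntegrableOn (fun lam : ℝ => (|2 * sin (s * lam / 2)| ^ (-(2 * d))) ^ r) (Icc (-π) π) := by
    intro s d r h
    simp_rw [← rpow_mul (abs_nonneg _), neg_mul]
    exact (intervalIntegrable_iff_integrableOn_Icc_of_le (by linarith [pi_pos])).1
      (intervalIntegrable_abs_two_mul_sin_rpow_neg s h _ _)
  exact integrable_mul_of_integrable_rpow hpq (fun _ => by positivity) (fun _ => by positivity)
    (by fun_prop : Measurable _).aestronglyMeasurable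
    (by fun_prop : Measurable _).aestronglyMeasurable (hfactor s₁ d₁ p hp) (hfactor s₂ d₂ q hq)

/-- Integrability of the seasonal long-memory spectral density
(Proposition 1(a) of the paper): if `|d₁| < 1/2`, `|d₂| < 1/2` and `|d₁ + d₂| < 1/2`,
then `λ ↦ |2 sin(s₁λ/2)|^{-2d₁} |2 sin(s₂λ/2)|^{-2d₂}` is integrable on `[-π, π]`. -/
theorem seasonal_spectral_density_integrable (s₁ s₂ : ℕ) (hs₁ : 0 < s₁) (hs₂ : 0 < s₂)
    (d₁ d₂ : ℝ) (hd₁ : |d₁| < 1 / 2) (hd₂ : |d₂| < 1 / 2) (hsum : |d₁ + d₂| < 1 / 2) :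
    IntegrableOn
      (fun lam : ℝ =>
        |2 * Real.sin (s₁ * lam / 2)| ^ (-(2 * d₁)) *
          |2 * Real.sin (s₂ * lam / 2)| ^ (-(2 * d₂)))
      (Set.Icc (-Real.pi) Real.pi) :=
  seasonal_spectral_density_integrable_general s₁ s₂ d₁ d₂ hd₁ hd₂ hsum
end

section
/- Let d be a real number with d > −1/2 that is not a nonnegative integer, and define π_k = Γ(k − d) / (Γ(k + 1) Γ(−d)) for positive integers k and π_0 = 1. Then ∑_{k=0}^{∞} π_k² < ∞. -/
/-!
For `k ≥ 1` the coefficient is `Γ(k - d) / (k! Γ(-d))`, and Euler's limit formula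
`Γ(s) = lim n^s n! / (s (s+1) ⋯ (s+n))` gives Wendel's asymptotics `Γ(s + n) / n! ~ n^(s-1)`.
Hence the coefficients are `O(k^(-d-1))`, whose squares are summable exactly when `d > -1/2`.
-/

open Real Filter Asymptotics Finset Topology
open scoped Nat

namespace Real

theorem Gamma_add_nat_eq_prod_mul {s : ℝ} (hs : ∀ m : ℕ, s ≠ -m) (n : ℕ) :
    Gamma (s + n) = (∏ j ∈ range n, (s + j)) * Gamma s := by
  induction n with
  | zero => simp
  | succ n ih =>
    have hsn : s + n ≠ 0 := fun h => hs n (eq_neg_of_add_eq_zero_left h)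
    rw [Nat.cast_succ, ← add_assoc, Gamma_add_one hsn, ih, prod_range_succ]
    ring

theorem Gamma_add_nat_div_factorial_div_rpow_eq {s : ℝ} (hs : ∀ m : ℕ, s ≠ -m) {n : ℕ}
    (hn : n ≠ 0) :
    Gamma (s + n) / n ! / (n : ℝ) ^ (s - 1) = Gamma s * (n / (n + s)) * (GammaSeq s n)⁻¹ := by
  have hn' : (0 : ℝ) < n := Nat.cast_pos.mpr (Nat.pos_of_ne_zero hn)
  have hprod : ∏ j ∈ range n, (s + j) ≠ 0 :=
    prod_ne_zero_iff.mpr fun j _ h => hs j (eq_neg_of_add_eq_zero_left h)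
  have hsn : (n : ℝ) + s ≠ 0 := fun h => hs n (eq_neg_of_add_eq_zero_right h)
  have hpow : (n : ℝ) ^ (s - 1) = (n : ℝ) ^ s / n := by rw [rpow_sub_one hn'.ne']
  rw [GammaSeq, prod_range_succ, Gamma_add_nat_eq_prod_mul hs, hpow]
  field_simp [(rpow_pos_of_pos hn' s).ne']
  ring

theorem Gamma_add_nat_div_factorial_isEquivalent_rpow {s : ℝ} (hs : ∀ m : ℕ, s ≠ -m) :
    (fun n : ℕ => Gamma (s + n) / n !) ~[atTop] fun n => (n : ℝ) ^ (s - 1) := by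
  have hΓ : Gamma s ≠ 0 := Gamma_ne_zero hs
  refine isEquivalent_of_tendsto_one ?_
  have hlim : Tendsto (fun n : ℕ => Gamma s * (n / (n + s)) * (GammaSeq s n)⁻¹) atTop
      (𝓝 (Gamma s * 1 * (Gamma s)⁻¹)) :=
    (tendsto_natCast_div_add_atTop s).const_mul _ |>.mul ((GammaSeq_tendsto_Gamma s).inv₀ hΓ)
  rw [mul_one, mul_inv_cancel₀ hΓ] at hlim
  refine hlim.congr' ?_
  filter_upwards [eventually_ne_atTop 0] with n hn
  exact (Gamma_add_nat_div_factorial_div_rpow_eq hs hn).symm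

end Real

theorem summable_sq_of_isBigO_rpow {f : ℕ → ℝ} {p : ℝ}
    (hf : f =O[atTop] fun n => (n : ℝ) ^ p) (hp : p < -(1 / 2)) :
    Summable fun n => f n ^ 2 := by
  refine summable_of_isBigO_nat' (Real.summable_nat_rpow.mpr (by linarith : p * 2 < -1)) ?_
  simpa only [← rpow_mul_natCast (Nat.cast_nonneg _), Nat.cast_ofNat] using hf.pow 2

/-- Square-summability of the fractional differencing coefficients: for `d > -1/2`
not a nonnegative integer, with `π_0 = 1` and `π_k = Γ(k-d)/(Γ(k+1)Γ(-d))` for `k ≥ 1`,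
one has `∑_{k≥0} π_k² < ∞`. -/
theorem fractional_coeff_sq_summable (d : ℝ) (hd : -(1 / 2) < d) (hd' : ∀ n : ℕ, d ≠ n) :
    Summable
      (fun k : ℕ =>
        (if k = 0 then 1 else
          Real.Gamma (k - d) / (Real.Gamma (k + 1) * Real.Gamma (-d))) ^ 2) := by
  have hs : ∀ m : ℕ, -d ≠ -m := fun m h => hd' m (neg_injective h)
  have hcoeff : (fun k : ℕ => (Gamma (-d))⁻¹ * (Gamma (-d + k) / k !)) =ᶠ[atTop]
      fun k => if k = 0 then 1 else Gamma (k - d) / (Gamma (k + 1) * Gamma (-d)) := by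
    filter_upwards [eventually_ne_atTop 0] with k hk
    rw [if_neg hk, Gamma_nat_eq_factorial, neg_add_eq_sub]
    ring
  refine summable_sq_of_isBigO_rpow (p := -d - 1) ?_ (by linarith)
  exact ((Gamma_add_nat_div_factorial_isEquivalent_rpow hs).isBigO.const_mul_left _).congr'
    hcoeff EventuallyEq.rfl
end

section
/- Let α > 0 and let L_m = (1/m) ∑_{i=1}^m log i denote the average of log 1, …, log m. Then (1/m) ∑_{j=1}^m (log j − L_m)·(j/m)^α → α/(α + 1)² as m → ∞. -/
open Real Filter

/-!
Since `log j - L_m = log (j / m) - R_m` with `R_m = (1/m) ∑ log (j / m)`, the centred sum equals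
`Q_m - R_m P_m`, where `P_m`, `R_m`, `Q_m` are the right-endpoint Riemann sums on `[0, 1]` of
`x ^ α`, `log x` and `log x * x ^ α`. These functions blow up at most logarithmically at `0`, and
Riemann sums of a function `g` continuous on `(0, 1]` still converge to `∫₀¹ g` when `|g|` on
`[x, 1]` is bounded by an integrable `G x`: the Riemann sum is the integral of the step function
`x ↦ g (⌈m x⌉ / m)`, to which dominated convergence applies. The limit is therefore
`∫₀¹ log x · x^α - (∫₀¹ log x)(∫₀¹ x^α) = -1/(α+1)² + 1/(α+1) = α/(α+1)²`.
-/

open MeasureTheory Set Topology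

noncomputable def riemannSum (g : ℝ → ℝ) (m : ℕ) : ℝ :=
  (1 / (m : ℝ)) * ∑ j ∈ Finset.Icc 1 m, g ((j : ℝ) / m)

section

variable {m : ℕ} {x : ℝ}

lemma natCeil_mul_div_mem_Icc (hm : m ≠ 0) (hx : x ∈ Ioc (0 : ℝ) 1) :
    (⌈(m : ℝ) * x⌉₊ / m : ℝ) ∈ Icc x 1 ∧ (⌈(m : ℝ) * x⌉₊ / m : ℝ) ≤ x + 1 / m := by
  have hm0 : (0 : ℝ) < m := by positivity
  refine ⟨⟨?_, ?_⟩, ?_⟩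
  · rw [le_div_iff₀ hm0, mul_comm]
    exact Nat.le_ceil _
  · rw [div_le_one hm0]
    exact_mod_cast Nat.ceil_le.mpr (by nlinarith [hx.2] : (m : ℝ) * x ≤ (m : ℕ))
  · rw [div_le_iff₀ hm0, add_mul, one_div_mul_cancel hm0.ne', mul_comm]
    exact (Nat.ceil_lt_add_one (by nlinarith [hx.1])).le

lemma tendsto_natCeil_mul_div (hx : x ∈ Ioc (0 : ℝ) 1) :
    Tendsto (fun m : ℕ => (⌈(m : ℝ) * x⌉₊ / m : ℝ)) atTop (𝓝[Ioc 0 1] x) := by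
  have hmem : ∀ᶠ m : ℕ in atTop, (⌈(m : ℝ) * x⌉₊ / m : ℝ) ∈ Icc x 1 ∧
      (⌈(m : ℝ) * x⌉₊ / m : ℝ) ≤ x + 1 / m := by
    filter_upwards [eventually_ne_atTop 0] with m hm using natCeil_mul_div_mem_Icc hm hx
  have hupper : Tendsto (fun m : ℕ => x + 1 / (m : ℝ)) atTop (𝓝 x) := by
    simpa using (tendsto_const_nhds (x := x)).add (tendsto_one_div_atTop_nhds_zero_nat (𝕜 := ℝ))
  refine tendsto_nhdsWithin_iff.2 ⟨?_, hmem.mono fun m hm => ⟨hx.1.trans_le hm.1.1, hm.1.2⟩⟩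
  exact tendsto_of_tendsto_of_tendsto_of_le_of_le' tendsto_const_nhds hupper
    (hmem.mono fun m hm => hm.1.1) (hmem.mono fun m hm => hm.2)

lemma natCeil_mul_eq_of_mem_Ioc (hm : m ≠ 0) {k : ℕ}
    (hx : x ∈ Ioc ((k : ℝ) / m) ((k + 1 : ℕ) / m)) : ⌈(m : ℝ) * x⌉₊ = k + 1 := by
  have hm0 : (0 : ℝ) < m := by positivity
  rw [Nat.ceil_eq_iff k.succ_ne_zero, Nat.succ_sub_one, mul_comm]
  exact ⟨(div_lt_iff₀ hm0).1 hx.1, (le_div_iff₀ hm0).1 hx.2⟩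

lemma setIntegral_comp_natCeil_mul_div (g : ℝ → ℝ) (hm : m ≠ 0) :
    ∫ x in Ioc (0 : ℝ) 1, g (⌈(m : ℝ) * x⌉₊ / m) = riemannSum g m := by
  have hm0 : (0 : ℝ) < m := by positivity
  set a : ℕ → ℝ := fun k => (k : ℝ) / m
  have hmono : ∀ k, a k ≤ a (k + 1) := fun k => by
    simp only [a]; gcongr; simp
  have hstep : ∀ k, EqOn (fun x => g (⌈(m : ℝ) * x⌉₊ / m)) (fun _ => g (a (k + 1)))
      (Ioc (a k) (a (k + 1))) := fun k x hx => by
    simp only [a, natCeil_mul_eq_of_mem_Ioc hm hx, Nat.cast_add, Nat.cast_one]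
  have hpiece : ∀ k, ∫ x in a k..a (k + 1), g (⌈(m : ℝ) * x⌉₊ / m) = 1 / m * g (a (k + 1)) := by
    intro k
    rw [intervalIntegral.integral_of_le (hmono k),
      setIntegral_congr_fun measurableSet_Ioc (hstep k),
      setIntegral_const, measureReal_def, Real.volume_Ioc, smul_eq_mul,
      ENNReal.toReal_ofReal (sub_nonneg.2 (hmono k))]
    simp only [a]; push_cast; ring
  have hint : ∀ k < m,
      IntervalIntegrable (fun x => g (⌈(m : ℝ) * x⌉₊ / m)) volume (a k) (a (k + 1)) :=
    fun k _ => (intervalIntegrable_iff_integrableOn_Ioc_of_le (hmono k)).2 <|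
      (integrableOn_const measure_Ioc_lt_top.ne).congr_fun (hstep k).symm measurableSet_Ioc
  have ha0 : a 0 = 0 := by simp [a]
  have ham : a m = 1 := div_self hm0.ne'
  rw [← intervalIntegral.integral_of_le zero_le_one, ← ha0, ← ham,
    ← intervalIntegral.sum_integral_adjacent_intervals hint,
    Finset.sum_congr rfl fun k _ => hpiece k,
    ← Finset.mul_sum, riemannSum, ← Finset.Ico_add_one_right_eq_Icc, Finset.sum_Ico_eq_sum_range]
  simp only [a, Nat.add_sub_cancel, add_comm 1, Nat.cast_add, Nat.cast_one]

theorem tendsto_riemannSum {g G : ℝ → ℝ} (hg : ContinuousOn g (Ioc 0 1))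
    (hG : IntegrableOn G (Ioc 0 1)) (hgG : ∀ x ∈ Ioc (0 : ℝ) 1, ∀ y ∈ Icc x 1, |g y| ≤ G x) :
    Tendsto (riemannSum g) atTop (𝓝 (∫ x in (0 : ℝ)..1, g x)) := by
  rw [intervalIntegral.integral_of_le zero_le_one]
  refine (tendsto_integral_filter_of_dominated_convergence G ?_ ?_ hG ?_).congr'
    ((eventually_ne_atTop 0).mono fun m hm => setIntegral_comp_natCeil_mul_div g hm)
  · refine Eventually.of_forall fun m => ?_
    exact ((Measurable.of_discrete (f := fun k : ℕ => g (k / m))).comp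
      (Nat.measurable_ceil.comp (measurable_const_mul _))).aestronglyMeasurable
  · filter_upwards [eventually_ne_atTop 0] with m hm
    refine (ae_restrict_iff' measurableSet_Ioc).2 (Eventually.of_forall fun x hx => ?_)
    exact hgG x hx _ (natCeil_mul_div_mem_Icc hm hx).1
  · refine (ae_restrict_iff' measurableSet_Ioc).2 (Eventually.of_forall fun x hx => ?_)
    exact (hg x hx).tendsto.comp (tendsto_natCeil_mul_div hx)

lemma continuousOn_log_mul_rpow {p : ℝ} (hp : 0 < p) :
    ContinuousOn (fun x => log x * x ^ p) (Ici 0) := by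
  intro x hx
  rcases (mem_Ici.1 hx).eq_or_lt with rfl | hx0
  · rw [← continuousWithinAt_Ioi_iff_Ici, ContinuousWithinAt, log_zero, zero_mul]
    exact tendsto_log_mul_rpow_nhdsGT_zero hp
  · exact ((continuousAt_log hx0.ne').mul
      (continuousAt_rpow_const x p (Or.inl hx0.ne'))).continuousWithinAt

lemma integral_log_mul_rpow {α : ℝ} (hα : 0 < α) :
    ∫ x in (0 : ℝ)..1, log x * x ^ α = -1 / (α + 1) ^ 2 := by
  have hα1 : α + 1 ≠ 0 := by linarith
  have hcont : ContinuousOn (fun x => log x * x ^ α) (uIcc 0 1) :=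
    (continuousOn_log_mul_rpow hα).mono (by simp [uIcc_of_le, Icc_subset_Ici_self])
  rw [intervalIntegral.integral_eq_sub_of_hasDeriv_right_of_le zero_le_one
    (f := fun x => (log x * x ^ (α + 1)) / (α + 1) - x ^ (α + 1) / (α + 1) ^ 2) ?_ ?_
    hcont.intervalIntegrable]
  · simp [zero_rpow hα1]
    field_simp
  · exact (((continuousOn_log_mul_rpow (by linarith)).mono Icc_subset_Ici_self).div_const _).sub
      ((continuous_rpow_const (by linarith)).continuousOn.div_const _)
  · intro x hx
    have hx0 : x ≠ 0 := hx.1.ne'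
    have hpow := hasDerivAt_rpow_const (p := α + 1) (Or.inl hx0)
    refine ((((hasDerivAt_log hx0).mul hpow).div_const (α + 1)).sub
      (hpow.div_const ((α + 1) ^ 2))).hasDerivWithinAt.congr_deriv ?_
    rw [add_sub_cancel_right, rpow_add_one hx0]
    field_simp
    ring

lemma abs_log_le_neg_log_of_le {x y : ℝ} (hx : 0 < x) (hxy : x ≤ y) (hy : y ≤ 1) :
    |log y| ≤ -log x := by
  rw [abs_of_nonpos (log_nonpos (hx.le.trans hxy) hy), neg_le_neg_iff]
  exact log_le_log hx hxy

lemma abs_rpow_le_one {y α : ℝ} (hy : y ∈ Icc (0 : ℝ) 1) (hα : 0 ≤ α) : |y ^ α| ≤ 1 := by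
  rw [abs_of_nonneg (rpow_nonneg hy.1 _)]
  exact rpow_le_one hy.1 hy.2 hα

lemma tendsto_riemannSum_rpow {α : ℝ} (hα : 0 ≤ α) :
    Tendsto (riemannSum fun x => x ^ α) atTop (𝓝 (α + 1)⁻¹) := by
  have h := tendsto_riemannSum (G := fun _ => 1) (continuous_rpow_const hα).continuousOn
    (integrableOn_const measure_Ioc_lt_top.ne)
    fun x hx y hy => abs_rpow_le_one ⟨hx.1.le.trans hy.1, hy.2⟩ hα
  rwa [integral_rpow (Or.inl (by linarith)), one_rpow, zero_rpow (by linarith), sub_zero,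
    one_div] at h

lemma integrableOn_neg_log : IntegrableOn (fun x => -log x) (Ioc (0 : ℝ) 1) :=
  (intervalIntegrable_iff_integrableOn_Ioc_of_le zero_le_one).1
    intervalIntegral.intervalIntegrable_log'.neg

lemma tendsto_riemannSum_log : Tendsto (riemannSum log) atTop (𝓝 (-1)) := by
  have h := tendsto_riemannSum (fun x hx => (continuousAt_log hx.1.ne').continuousWithinAt)
    integrableOn_neg_log fun x hx y hy => abs_log_le_neg_log_of_le hx.1 hy.1 hy.2
  rwa [integral_log_from_zero, log_one, mul_zero, zero_sub] at h

lemma tendsto_riemannSum_log_mul_rpow {α : ℝ} (hα : 0 < α) :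
    Tendsto (riemannSum fun x => log x * x ^ α) atTop (𝓝 (-1 / (α + 1) ^ 2)) := by
  have hbound : ∀ x ∈ Ioc (0 : ℝ) 1, ∀ y ∈ Icc x 1, |log y * y ^ α| ≤ -log x :=
    fun x hx y hy => calc
      |log y * y ^ α| ≤ |log y| := by
        rw [abs_mul]
        exact mul_le_of_le_one_right (abs_nonneg _)
          (abs_rpow_le_one ⟨hx.1.le.trans hy.1, hy.2⟩ hα.le)
      _ ≤ -log x := abs_log_le_neg_log_of_le hx.1 hy.1 hy.2
  have h := tendsto_riemannSum
    ((continuousOn_log_mul_rpow hα).mono (Ioc_subset_Ioi_self.trans Ioi_subset_Ici_self))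
    integrableOn_neg_log hbound
  rwa [integral_log_mul_rpow hα] at h

lemma riemannSum_log_eq (hm : m ≠ 0) :
    riemannSum log m = 1 / (m : ℝ) * ∑ i ∈ Finset.Icc 1 m, log i - log m := by
  have hm0 : (m : ℝ) ≠ 0 := by positivity
  rw [riemannSum, Finset.sum_congr rfl fun j hj =>
      log_div (by have := (Finset.mem_Icc.1 hj).1; positivity) hm0,
    Finset.sum_sub_distrib, Finset.sum_const, Nat.card_Icc, Nat.add_sub_cancel, nsmul_eq_mul,
    mul_sub, ← mul_assoc, one_div_mul_cancel hm0, one_mul]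

lemma centered_log_sum_eq (w : ℝ → ℝ) (hm : m ≠ 0) :
    1 / (m : ℝ) * ∑ j ∈ Finset.Icc 1 m,
        (log j - 1 / (m : ℝ) * ∑ i ∈ Finset.Icc 1 m, log i) * w (j / m) =
      riemannSum (fun x => log x * w x) m - riemannSum log m * riemannSum w m := by
  have hm0 : (m : ℝ) ≠ 0 := by positivity
  have hcenter : ∀ j ∈ Finset.Icc 1 m,
      log j - 1 / (m : ℝ) * ∑ i ∈ Finset.Icc 1 m, log i = log (j / m) - riemannSum log m := by
    intro j hj
    rw [riemannSum_log_eq hm, log_div (by have := (Finset.mem_Icc.1 hj).1; positivity) hm0]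
    ring
  rw [Finset.sum_congr rfl fun j hj => by rw [hcenter j hj]]
  simp only [riemannSum, sub_mul, Finset.sum_sub_distrib, ← Finset.mul_sum]
  ring

end

/-- For `α > 0` and `L_m = (1/m) ∑_{i=1}^m log i`,
`(1/m) ∑_{j=1}^m (log j - L_m)(j/m)^α → α/(α+1)²` as `m → ∞`. -/
theorem log_centered_power_sum_tendsto (α : ℝ) (hα : 0 < α) :
    Tendsto
      (fun m : ℕ =>
        (1 / (m : ℝ)) *
          ∑ j ∈ Finset.Icc 1 m,
            (Real.log j - (1 / (m : ℝ)) * ∑ i ∈ Finset.Icc 1 m, Real.log i) *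
              ((j : ℝ) / (m : ℝ)) ^ α)
      atTop (nhds (α / (α + 1) ^ 2)) := by
  have hlim := (tendsto_riemannSum_log_mul_rpow hα).sub
    (tendsto_riemannSum_log.mul (tendsto_riemannSum_rpow hα.le))
  have hval : -1 / (α + 1) ^ 2 - -1 * (α + 1)⁻¹ = α / (α + 1) ^ 2 := by
    field_simp
    ring
  rw [hval] at hlim
  refine hlim.congr' ((eventually_ne_atTop 0).mono fun m hm => ?_)
  exact (centered_log_sum_eq (fun x => x ^ α) hm).symm
end

section
/- Let a ∈ ℝ, δ > 0, c > 0, and let g : ℝ → ℝ be differentiable on [a, a + δ] with |g′(x)| ≤ L for all x ∈ [a, a + δ]. Write L_m = (1/m) ∑_{i=1}^m log i and ḡ = (1/m) ∑_{i=1}^m g(a + ci/n). Then for all positive integers m ≥ 1 and n with cm/n ≤ δ, one has | ∑_{j=1}^m (log j − L_m)(g(a + cj/n) − ḡ) | ≤ L c (m²/n) log m. -/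
open Real

/-!
Both centered factors are bounded by the oscillation of the uncentered sequence: for
`log j` with `1 ≤ j ≤ m` it is at most `log m`, and for `g(a + cj/n)` the mean value
theorem bounds it by `L c m / n`. Summing the `m` products of these bounds gives
`L c (m² / n) log m`.
-/

namespace Finset

variable {ι : Type*} (s : Finset ι)

theorem abs_sub_mean_le_of_abs_sub_le (f : ι → ℝ) {D : ℝ}
    (hD : ∀ i ∈ s, ∀ j ∈ s, |f i - f j| ≤ D) {j : ι} (hj : j ∈ s) :
    |f j - (1 / (#s : ℝ)) * ∑ i ∈ s, f i| ≤ D := by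
  have hs : (0 : ℝ) < #s := by exact_mod_cast card_pos.2 ⟨j, hj⟩
  have hcenter : f j - (1 / (#s : ℝ)) * ∑ i ∈ s, f i = 1 / (#s : ℝ) * ∑ i ∈ s, (f j - f i) := by
    rw [sum_sub_distrib, sum_const, nsmul_eq_mul]
    field_simp
  rw [hcenter, abs_mul, abs_of_pos (by positivity)]
  calc 1 / (#s : ℝ) * |∑ i ∈ s, (f j - f i)|
      ≤ 1 / (#s : ℝ) * ∑ i ∈ s, |f j - f i| := by gcongr; exact abs_sum_le_sum_abs _ _
    _ ≤ 1 / (#s : ℝ) * (#s * D) := by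
        rw [← nsmul_eq_mul]
        gcongr
        exact sum_le_card_nsmul s _ D (hD j hj)
    _ = D := by field_simp

theorem abs_sum_mul_le_card_mul (u v : ι → ℝ) {U V : ℝ}
    (hu : ∀ i ∈ s, |u i| ≤ U) (hv : ∀ i ∈ s, |v i| ≤ V) :
    |∑ i ∈ s, u i * v i| ≤ #s * (U * V) := by
  calc |∑ i ∈ s, u i * v i| ≤ ∑ i ∈ s, |u i * v i| := abs_sum_le_sum_abs _ _
    _ ≤ #s * (U * V) := by
        rw [← nsmul_eq_mul]
        refine sum_le_card_nsmul s _ (U * V) fun i hi => ?_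
        rw [abs_mul]
        exact mul_le_mul (hu i hi) (hv i hi) (abs_nonneg _) ((abs_nonneg _).trans (hu i hi))

end Finset

theorem abs_log_natCast_sub_le_log {i j m : ℕ} (hi : i ∈ Finset.Icc 1 m) (hj : j ∈ Finset.Icc 1 m) :
    |log i - log j| ≤ log m := by
  rw [Finset.mem_Icc] at hi hj
  have hlog : ∀ k : ℕ, 1 ≤ k → k ≤ m → 0 ≤ log k ∧ log k ≤ log m := fun k h1 h2 =>
    ⟨log_nonneg (by exact_mod_cast h1), log_le_log (by positivity) (by exact_mod_cast h2)⟩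
  obtain ⟨hi0, him⟩ := hlog i hi.1 hi.2
  obtain ⟨hj0, hjm⟩ := hlog j hj.1 hj.2
  exact abs_sub_le_of_nonneg_of_le hi0 him hj0 hjm

theorem abs_sub_le_mul_of_abs_derivWithin_le {g : ℝ → ℝ} {a δ L h s t : ℝ}
    (hg : DifferentiableOn ℝ g (Set.Icc a (a + δ)))
    (hg' : ∀ x ∈ Set.Icc a (a + δ), |derivWithin g (Set.Icc a (a + δ)) x| ≤ L)
    (hh : h ≤ δ) (hs : s ∈ Set.Icc 0 h) (ht : t ∈ Set.Icc 0 h) :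
    |g (a + s) - g (a + t)| ≤ L * h := by
  have hmem : ∀ r ∈ Set.Icc 0 h, a + r ∈ Set.Icc a (a + δ) := fun r hr =>
    ⟨by linarith [hr.1], by linarith [hr.2]⟩
  have hL : 0 ≤ L := (abs_nonneg _).trans (hg' _ (hmem s hs))
  calc |g (a + s) - g (a + t)| ≤ L * |s - t| := by
        simpa using (convex_Icc a (a + δ)).norm_image_sub_le_of_norm_derivWithin_le hg hg'
          (hmem t ht) (hmem s hs)
    _ ≤ L * h := by gcongr; exact abs_sub_le_of_nonneg_of_le hs.1 hs.2 ht.1 ht.2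

theorem mul_natCast_div_mem_Icc {c : ℝ} (hc : 0 ≤ c) {j m : ℕ} (n : ℕ) (hj : j ≤ m) :
    c * j / n ∈ Set.Icc 0 (c * m / n) :=
  ⟨by positivity, by gcongr⟩

theorem centered_smooth_log_cross_bound_general (a δ c L : ℝ) (hc : 0 < c)
    (g : ℝ → ℝ) (hg : DifferentiableOn ℝ g (Set.Icc a (a + δ)))
    (hg' : ∀ x ∈ Set.Icc a (a + δ), |derivWithin g (Set.Icc a (a + δ)) x| ≤ L)
    (m n : ℕ) (hmn : c * m / n ≤ δ) :
    |∑ j ∈ Finset.Icc 1 m,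
        (Real.log j - (1 / (m : ℝ)) * ∑ i ∈ Finset.Icc 1 m, Real.log i) *
          (g (a + c * j / n) - (1 / (m : ℝ)) * ∑ i ∈ Finset.Icc 1 m, g (a + c * i / n))| ≤
      L * c * ((m : ℝ) ^ 2 / n) * Real.log m := by
  have hcard : ((Finset.Icc 1 m).card : ℝ) = m := by simp
  have hlog_dev : ∀ j ∈ Finset.Icc 1 m,
      |log j - (1 / (m : ℝ)) * ∑ i ∈ Finset.Icc 1 m, log i| ≤ log m := fun j hj => by
    simpa only [hcard] using Finset.abs_sub_mean_le_of_abs_sub_le _ (fun i : ℕ => log i)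
      (fun _ hi _ hj => abs_log_natCast_sub_le_log hi hj) hj
  have hg_dev : ∀ j ∈ Finset.Icc 1 m,
      |g (a + c * j / n) - (1 / (m : ℝ)) * ∑ i ∈ Finset.Icc 1 m, g (a + c * i / n)| ≤
        L * (c * m / n) := fun j hj => by
    simpa only [hcard] using
      Finset.abs_sub_mean_le_of_abs_sub_le _ (fun i : ℕ => g (a + c * i / n))
        (fun i hi k hk => abs_sub_le_mul_of_abs_derivWithin_le hg hg' hmn
          (mul_natCast_div_mem_Icc hc.le n (Finset.mem_Icc.1 hi).2)
          (mul_natCast_div_mem_Icc hc.le n (Finset.mem_Icc.1 hk).2)) hj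
  calc _ ≤ (m : ℝ) * (log m * (L * (c * m / n))) := by
        simpa only [hcard] using Finset.abs_sum_mul_le_card_mul _ _ _ hlog_dev hg_dev
    _ = L * c * ((m : ℝ) ^ 2 / n) * log m := by ring

/-- Cross-term bound of order `m² n⁻¹ log m`: if `g` is differentiable on `[a, a+δ]`
with derivative bounded by `L`, `L_m = (1/m)∑_{i=1}^m log i` and
`ḡ = (1/m)∑_{i=1}^m g(a+ci/n)`, then
`|∑_{j=1}^m (log j - L_m)(g(a+cj/n) - ḡ)| ≤ L c (m²/n) log m`. -/
theorem centered_smooth_log_cross_bound (a δ c L : ℝ) (hδ : 0 < δ) (hc : 0 < c)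
    (g : ℝ → ℝ) (hg : DifferentiableOn ℝ g (Set.Icc a (a + δ)))
    (hg' : ∀ x ∈ Set.Icc a (a + δ), |derivWithin g (Set.Icc a (a + δ)) x| ≤ L)
    (m n : ℕ) (hm : 1 ≤ m) (hn : 0 < n) (hmn : c * m / n ≤ δ) :
    |∑ j ∈ Finset.Icc 1 m,
        (Real.log j - (1 / (m : ℝ)) * ∑ i ∈ Finset.Icc 1 m, Real.log i) *
          (g (a + c * j / n) - (1 / (m : ℝ)) * ∑ i ∈ Finset.Icc 1 m, g (a + c * i / n))| ≤
      L * c * ((m : ℝ) ^ 2 / n) * Real.log m :=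
  centered_smooth_log_cross_bound_general a δ c L hc g hg hg' m n hmn
end
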